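/- Fix the parameters of system i and an exchange efficiency β_E ∈ [0,1] and factor β_B ∈ {0,1}. Define the value function C̄_i(e_i, e_ī, w_i, w_ī) as the infimum of α_i^E·E + α_i^G·G over all (E, G, (p_k), (b_k)) with E, G, p_k ≥ 0, b_k > 0, E ≤ Ē_i, Σ_k p_k + P_{c,i} ≤ E + G + β_E·e_ī − e_i, Σ_k b_k ≤ W_i + β_B·w_ī − w_i, and b_k·log₂(1 + g_k·p_k/(b_k·N₀)) ≥ r_k for all k ∈ K_i. Then C̄_i is a convex function on the convex domain D = {(e_i, e_ī, w_i, w_ī) ∈ ℝ⁴ : all components ≥ 0 and w_i − β_B·w_ī < W_i}. -/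

import Mathlib

/-!
`Cbar` is the partial minimum, over the operating point `(E, G, p, b)`, of a linear cost on the set
of pairs (exchange vector, operating point) satisfying the constraints, and partial minimization of
a jointly convex function preserves convexity. All constraints are affine except the rate
constraints, whose right-hand side `b log₂ (1 + g p / (b N₀))` is the perspective of the concave
function `x ↦ log₂ (1 + (g / N₀) x)`, hence jointly concave in `(p, b)`; so the constraint set is
convex. On the domain the problem is feasible (share the spare bandwidth equally, give every
terminal the power its rate target requires, buy the energy from the grid) and the cost is
nonnegative, so every infimum involved is that of a nonempty set bounded below.
-/

/-- The minimum-cost (value) function `C̄_i` of system `i` as a function of the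
inter-system exchange vector `v = (e_i, e_ī, w_i, w_ī)`. -/
noncomputable def Cbar {ι : Type*} (K : Finset ι) (g r : ι → ℝ)
    (N₀ W Pc Ebar αE αG βE βB : ℝ) (v : ℝ × ℝ × ℝ × ℝ) : ℝ :=
  sInf {c : ℝ | ∃ (E G : ℝ) (p b : ι → ℝ),
    0 ≤ E ∧ 0 ≤ G ∧ (∀ k ∈ K, 0 ≤ p k) ∧ (∀ k ∈ K, 0 < b k) ∧ E ≤ Ebar ∧
    (∑ k ∈ K, p k) + Pc ≤ E + G + βE * v.2.1 - v.1 ∧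
    (∑ k ∈ K, b k) ≤ W + βB * v.2.2.2 - v.2.2.1 ∧
    (∀ k ∈ K, r k ≤ b k * Real.logb 2 (1 + g k * p k / (b k * N₀))) ∧
    c = αE * E + αG * G}

open Set Real

section PartialMinimization

variable {E F : Type*} [AddCommGroup E] [Module ℝ E] [AddCommGroup F] [Module ℝ F]

theorem ConvexOn.sInf_fiber {s : Set E} {R : Set (E × F)} {f : E × F → ℝ}
    (hf : ConvexOn ℝ R f) (hs : Convex ℝ s) (hbdd : BddBelow (f '' R))
    (hne : ∀ v ∈ s, ∃ x, (v, x) ∈ R) :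
    ConvexOn ℝ s fun v => sInf {c | ∃ x, (v, x) ∈ R ∧ c = f (v, x)} := by
  have hfiber_bdd (u : E) : BddBelow {c | ∃ x, (u, x) ∈ R ∧ c = f (u, x)} :=
    hbdd.mono <| by rintro _ ⟨x, hx, rfl⟩; exact ⟨_, hx, rfl⟩
  have hfiber_ne (u : E) (hu : u ∈ s) : {c | ∃ x, (u, x) ∈ R ∧ c = f (u, x)}.Nonempty :=
    let ⟨x, hx⟩ := hne u hu; ⟨_, x, hx, rfl⟩
  refine ⟨hs, fun v hv w hw a b ha hb hab => le_of_forall_pos_le_add fun ε hε => ?_⟩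
  obtain ⟨_, ⟨x, hx, rfl⟩, hx_lt⟩ := Real.lt_sInf_add_pos (hfiber_ne v hv) hε
  obtain ⟨_, ⟨y, hy, rfl⟩, hy_lt⟩ := Real.lt_sInf_add_pos (hfiber_ne w hw) hε
  calc sInf {c | ∃ z, (a • v + b • w, z) ∈ R ∧ c = f (a • v + b • w, z)}
      ≤ f (a • (v, x) + b • (w, y)) := csInf_le (hfiber_bdd _) ⟨_, hf.1 hx hy ha hb hab, rfl⟩
    _ ≤ a * f (v, x) + b * f (w, y) := hf.2 hx hy ha hb hab
    _ ≤ a * sInf {c | ∃ z, (v, z) ∈ R ∧ c = f (v, z)}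
          + b * sInf {c | ∃ z, (w, z) ∈ R ∧ c = f (w, z)} + ε := by
      linear_combination a * hx_lt.le + b * hy_lt.le + ε * hab

theorem ConcaveOn.perspective {s : Set E} {h : E → ℝ} (hh : ConcaveOn ℝ s h) :
    ConcaveOn ℝ {z : E × ℝ | 0 < z.2 ∧ z.2⁻¹ • z.1 ∈ s} fun z => z.2 * h (z.2⁻¹ • z.1) := by
  set P := {z : E × ℝ | 0 < z.2 ∧ z.2⁻¹ • z.1 ∈ s}
  have key : ∀ ⦃z₁⦄, z₁ ∈ P → ∀ ⦃z₂⦄, z₂ ∈ P → ∀ ⦃a b : ℝ⦄, 0 ≤ a → 0 ≤ b → a + b = 1 →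
      a • z₁ + b • z₂ ∈ P ∧ a • (z₁.2 * h (z₁.2⁻¹ • z₁.1)) + b • (z₂.2 * h (z₂.2⁻¹ • z₂.1)) ≤
        (a • z₁ + b • z₂).2 * h ((a • z₁ + b • z₂).2⁻¹ • (a • z₁ + b • z₂).1) := by
    rintro ⟨x₁, t₁⟩ ⟨ht₁, hx₁⟩ ⟨x₂, t₂⟩ ⟨ht₂, hx₂⟩ a b ha hb hab
    simp only [Prod.smul_mk, Prod.mk_add_mk, smul_eq_mul]
    set T := a * t₁ + b * t₂
    have hT : 0 < T := convex_Ioi (0 : ℝ) ht₁ ht₂ ha hb hab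
    have hμ₁ : 0 ≤ a * t₁ / T := by positivity
    have hμ₂ : 0 ≤ b * t₂ / T := by positivity
    have hμ : a * t₁ / T + b * t₂ / T = 1 := by rw [← add_div, div_self hT.ne']
    have hmix : T⁻¹ • (a • x₁ + b • x₂) =
        (a * t₁ / T) • (t₁⁻¹ • x₁) + (b * t₂ / T) • (t₂⁻¹ • x₂) := by
      simp only [smul_add, smul_smul]
      congr 2 <;> field_simp
    refine ⟨⟨hT, hmix ▸ hh.1 hx₁ hx₂ hμ₁ hμ₂ hμ⟩, ?_⟩
    calc a * (t₁ * h (t₁⁻¹ • x₁)) + b * (t₂ * h (t₂⁻¹ • x₂))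
        = T * (a * t₁ / T * h (t₁⁻¹ • x₁) + b * t₂ / T * h (t₂⁻¹ • x₂)) := by field_simp
      _ ≤ T * h (T⁻¹ • (a • x₁ + b • x₂)) := by
        rw [hmix]; exact mul_le_mul_of_nonneg_left (hh.2 hx₁ hx₂ hμ₁ hμ₂ hμ) hT.le
  exact ⟨fun _ h₁ _ h₂ _ _ ha hb hab => (key h₁ h₂ ha hb hab).1,
    fun _ h₁ _ h₂ _ _ ha hb hab => (key h₁ h₂ ha hb hab).2⟩

end PartialMinimization

theorem concaveOn_logb_one_add_mul {β c : ℝ} (hβ : 1 < β) (hc : 0 ≤ c) :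
    ConcaveOn ℝ (Ici 0) fun x => logb β (1 + c * x) := by
  have hlog := (strictConcaveOn_log_Ioi.concaveOn.comp_affineMap
    (AffineMap.const ℝ ℝ (1 : ℝ) + c • AffineMap.id ℝ ℝ)).smul (inv_nonneg.2 (log_nonneg hβ.le))
  refine (hlog.subset (fun x (hx : 0 ≤ x) => ?_) (convex_Ici 0)).congr fun x _ => ?_
  · simp only [AffineMap.coe_add, AffineMap.coe_const, Function.const_one, AffineMap.coe_smul,
      AffineMap.coe_id, mem_preimage, Pi.add_apply, Pi.one_apply, Pi.smul_apply, id_eq,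
      smul_eq_mul, mem_Ioi]
    positivity
  · simp [logb, div_eq_inv_mul]

noncomputable def shannonRate (g N₀ p b : ℝ) : ℝ := b * logb 2 (1 + g * p / (b * N₀))

noncomputable def requiredPower (g N₀ r b : ℝ) : ℝ := b * N₀ * (2 ^ (r / b) - 1) / g

theorem concaveOn_shannonRate {g N₀ : ℝ} (hg : 0 ≤ g) (hN₀ : 0 ≤ N₀) :
    ConcaveOn ℝ {z : ℝ × ℝ | 0 ≤ z.1 ∧ 0 < z.2} fun z => shannonRate g N₀ z.1 z.2 := by
  convert (concaveOn_logb_one_add_mul one_lt_two (div_nonneg hg hN₀)).perspective using 1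
  · ext ⟨p, b⟩
    simp only [mem_ofPred_eq, mem_Ici, smul_eq_mul]
    exact ⟨fun ⟨hp, hb⟩ => ⟨hb, by positivity⟩,
      fun ⟨hb, hp⟩ => ⟨(mul_nonneg_iff_of_pos_left (inv_pos.2 hb)).1 hp, hb⟩⟩
  · ext ⟨p, b⟩
    simp only [shannonRate, smul_eq_mul]
    congr 3
    ring

theorem requiredPower_nonneg {g N₀ r b : ℝ} (hg : 0 ≤ g) (hN₀ : 0 ≤ N₀) (hr : 0 ≤ r)
    (hb : 0 < b) : 0 ≤ requiredPower g N₀ r b := by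
  have : 1 ≤ (2 : ℝ) ^ (r / b) := one_le_rpow one_le_two (div_nonneg hr hb.le)
  unfold requiredPower
  have : 0 ≤ (2 : ℝ) ^ (r / b) - 1 := by linarith
  positivity

theorem shannonRate_requiredPower {g N₀ r b : ℝ} (hg : g ≠ 0) (hN₀ : N₀ ≠ 0) (hb : 0 < b) :
    shannonRate g N₀ (requiredPower g N₀ r b) b = r := by
  have hsnr : g * requiredPower g N₀ r b / (b * N₀) = 2 ^ (r / b) - 1 := by
    unfold requiredPower
    field_simp
  rw [shannonRate, hsnr, add_sub_cancel, logb_rpow two_pos one_lt_two.ne', mul_div_cancel₀ _ hb.ne']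

section Feasibility

variable {ι : Type*} (K : Finset ι) (g r : ι → ℝ) (N₀ W Pc Ebar βE βB : ℝ)

def feasibleSet : Set ((ℝ × ℝ × ℝ × ℝ) × ℝ × ℝ × (ι → ℝ) × (ι → ℝ)) :=
  {(v, E, G, p, b) | 0 ≤ E ∧ 0 ≤ G ∧ (∀ k ∈ K, 0 ≤ p k) ∧ (∀ k ∈ K, 0 < b k) ∧ E ≤ Ebar ∧
    (∑ k ∈ K, p k) + Pc ≤ E + G + βE * v.2.1 - v.1 ∧
    (∑ k ∈ K, b k) ≤ W + βB * v.2.2.2 - v.2.2.1 ∧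
    (∀ k ∈ K, r k ≤ shannonRate (g k) N₀ (p k) (b k))}

theorem Cbar_eq_sInf_feasibleSet (αE αG : ℝ) (v : ℝ × ℝ × ℝ × ℝ) :
    Cbar K g r N₀ W Pc Ebar αE αG βE βB v =
      sInf {c | ∃ x, (v, x) ∈ feasibleSet K g r N₀ W Pc Ebar βE βB ∧
        c = αE * x.1 + αG * x.2.1} := by
  simp [Cbar, feasibleSet, shannonRate, and_assoc]

variable {K g r N₀ W Pc Ebar βE βB}

theorem convex_feasibleSet (hg : ∀ k ∈ K, 0 ≤ g k) (hN₀ : 0 ≤ N₀) :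
    Convex ℝ (feasibleSet K g r N₀ W Pc Ebar βE βB) := by
  rintro ⟨⟨e, e', w, w'⟩, E, G, p, b⟩ ⟨hE, hG, hp, hb, hEbar, hpow, hbw, hrate⟩
    ⟨⟨f, f', u, u'⟩, E', G', p', b'⟩ ⟨hE', hG', hp', hb', hEbar', hpow', hbw', hrate'⟩ s t hs ht hst
  have hlink (k : ι) (hk : k ∈ K) := (concaveOn_shannonRate (hg k hk) hN₀).convex_ge (r k)
    (x := (p k, b k)) ⟨⟨hp k hk, hb k hk⟩, hrate k hk⟩
    (y := (p' k, b' k)) ⟨⟨hp' k hk, hb' k hk⟩, hrate' k hk⟩ hs ht hst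
  simp only [Prod.smul_mk, Prod.mk_add_mk, smul_eq_mul, mem_ofPred_eq] at hlink
  simp only [feasibleSet, Prod.smul_mk, Prod.mk_add_mk, smul_eq_mul, mem_ofPred_eq, Pi.add_apply,
    Pi.smul_apply, Finset.sum_add_distrib, ← Finset.mul_sum]
  refine ⟨by positivity, by positivity, fun k hk => (hlink k hk).1.1, fun k hk => (hlink k hk).1.2,
    ?_, ?_, ?_, fun k hk => (hlink k hk).2⟩
  · linear_combination s * hEbar + t * hEbar' + Ebar * hst
  · linear_combination s * hpow + t * hpow' - Pc * hst
  · linear_combination s * hbw + t * hbw' + W * hst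

theorem exists_mem_feasibleSet (hg : ∀ k ∈ K, 0 < g k) (hr : ∀ k ∈ K, 0 ≤ r k) (hN₀ : 0 < N₀)
    (hPc : 0 ≤ Pc) (hEbar : 0 ≤ Ebar) (hβE : 0 ≤ βE) {v : ℝ × ℝ × ℝ × ℝ} (he : 0 ≤ v.1)
    (he' : 0 ≤ v.2.1) (hw : v.2.2.1 - βB * v.2.2.2 < W) :
    ∃ x, (v, x) ∈ feasibleSet K g r N₀ W Pc Ebar βE βB := by
  obtain ⟨e, e', w, w'⟩ := v
  dsimp only at he he' hw
  set share := (W + βB * w' - w) / (K.card + 1)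
  have hshare : 0 < share := div_pos (by linarith) (by positivity)
  set p := fun k => requiredPower (g k) N₀ (r k) share
  have hp (k : ι) (hk : k ∈ K) : 0 ≤ p k :=
    requiredPower_nonneg (hg k hk).le hN₀.le (hr k hk) hshare
  have hbandwidth : ∑ _k ∈ K, share ≤ W + βB * w' - w := by
    rw [Finset.sum_const, nsmul_eq_mul]
    calc (K.card : ℝ) * share ≤ (K.card + 1) * share := by linarith
      _ = W + βB * w' - w := mul_div_cancel₀ _ (by positivity)
  have hpower : 0 ≤ ∑ k ∈ K, p k := Finset.sum_nonneg hp
  refine ⟨(0, ∑ k ∈ K, p k + Pc + e, p, fun _ => share), le_rfl, by positivity, hp,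
    fun _ _ => hshare, hEbar, by linarith [mul_nonneg hβE he'], hbandwidth,
    fun k hk => (shannonRate_requiredPower (hg k hk).ne' hN₀.ne' hshare).ge⟩

end Feasibility

theorem convex_exchangeDomain (βB W : ℝ) :
    Convex ℝ {v : ℝ × ℝ × ℝ × ℝ | 0 ≤ v.1 ∧ 0 ≤ v.2.1 ∧ 0 ≤ v.2.2.1 ∧ 0 ≤ v.2.2.2 ∧
      v.2.2.1 - βB * v.2.2.2 < W} := by
  rintro ⟨e, e', w, w'⟩ ⟨he, he', hw, hw', hslack⟩ ⟨f, f', u, u'⟩ ⟨hf, hf', hu, hu', hslack'⟩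
    s t hs ht hst
  simp only [Prod.smul_mk, Prod.mk_add_mk, smul_eq_mul, mem_ofPred_eq]
  refine ⟨by positivity, by positivity, by positivity, by positivity, ?_⟩
  have hcombo := convex_Iio W hslack hslack' hs ht hst
  simp only [smul_eq_mul, mem_Iio] at hcombo
  linarith

theorem Cbar_convexOn_general {ι : Type*} (K : Finset ι)
    (g r : ι → ℝ) (hg : ∀ k ∈ K, 0 < g k) (hr : ∀ k ∈ K, 0 < r k)
    (N₀ W Pc Ebar αE αG βE βB : ℝ)
    (hN₀ : 0 < N₀) (hPc : 0 ≤ Pc) (hEbar : 0 ≤ Ebar)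
    (hαE : 0 < αE) (hα : αE < αG) (hβE : βE ∈ Set.Icc (0 : ℝ) 1) :
    ConvexOn ℝ
      {v : ℝ × ℝ × ℝ × ℝ | 0 ≤ v.1 ∧ 0 ≤ v.2.1 ∧ 0 ≤ v.2.2.1 ∧ 0 ≤ v.2.2.2 ∧
        v.2.2.1 - βB * v.2.2.2 < W}
      (Cbar K g r N₀ W Pc Ebar αE αG βE βB) := by
  have hcost : ConvexOn ℝ (feasibleSet K g r N₀ W Pc Ebar βE βB)
      fun z => αE * z.2.1 + αG * z.2.2.1 :=
    ⟨convex_feasibleSet (fun k hk => (hg k hk).le) hN₀.le, fun _ _ _ _ _ _ _ _ _ => le_of_eq <| by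
      simp only [Prod.snd_add, Prod.fst_add, Prod.smul_snd, Prod.smul_fst, smul_eq_mul]; ring⟩
  have hbdd : BddBelow
      ((fun z => αE * z.2.1 + αG * z.2.2.1) '' feasibleSet K g r N₀ W Pc Ebar βE βB) := by
    refine ⟨0, ?_⟩
    rintro _ ⟨⟨v, E, G, p, b⟩, ⟨hE, hG, -⟩, rfl⟩
    have hαG := hαE.trans hα
    positivity
  rw [funext (Cbar_eq_sInf_feasibleSet K g r N₀ W Pc Ebar βE βB αE αG)]
  exact hcost.sInf_fiber (convex_exchangeDomain βB W) hbdd fun v hv =>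
    exists_mem_feasibleSet hg (fun k hk => (hr k hk).le) hN₀ hPc hEbar hβE.1 hv.1 hv.2.1
      hv.2.2.2.2

/-- The value function `C̄_i` is convex on the convex domain
`D = {v ∈ ℝ⁴ : v ≥ 0 componentwise, w_i − β_B·w_ī < W_i}`. -/
theorem Cbar_convexOn {ι : Type*} (K : Finset ι) (hK : K.Nonempty)
    (g r : ι → ℝ) (hg : ∀ k ∈ K, 0 < g k) (hr : ∀ k ∈ K, 0 < r k)
    (N₀ W Pc Ebar αE αG βE βB : ℝ)
    (hN₀ : 0 < N₀) (hW : 0 < W) (hPc : 0 ≤ Pc) (hEbar : 0 ≤ Ebar)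
    (hαE : 0 < αE) (hα : αE < αG) (hβE : βE ∈ Set.Icc (0 : ℝ) 1)
    (hβB : βB = 0 ∨ βB = 1) :
    ConvexOn ℝ
      {v : ℝ × ℝ × ℝ × ℝ | 0 ≤ v.1 ∧ 0 ≤ v.2.1 ∧ 0 ≤ v.2.2.1 ∧ 0 ≤ v.2.2.2 ∧
        v.2.2.1 - βB * v.2.2.2 < W}
      (Cbar K g r N₀ W Pc Ebar αE αG βE βB) :=
  Cbar_convexOn_general K g r hg hr N₀ W Pc Ebar αE αG βE βB hN₀ hPc hEbar hαE hα hβE
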